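/- arXiv:1304.2540 — 3 statements merged into one kernel-verified Lean document; each statement's English description precedes it below -/
import Mathlib

section
/- Let r be a real number. Define Φ(x,y) = (1 − √x − √y)^(−2r) on the open set U = {(x,y) ∈ ℝ² : x > 0, y > 0, √x + √y < 1}. Then Φ satisfies both Horn differential equations of the Appell function F₄(r, r+1/2, 1/2, 1/2), namely (θ_x(θ_x − 1/2) − x(θ_x + θ_y + r)(θ_x + θ_y + r + 1/2))Φ = 0 and (θ_y(θ_y − 1/2) − y(θ_x + θ_y + r)(θ_x + θ_y + r + 1/2))Φ = 0 at every point of U. -/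
open Real ContinuousLinearMap

private lemma rpow_step {s a b : ℝ} (hs : s ≠ 0) (h : a = b + 1) : s ^ a = s ^ b * s := by
  rw [h, Real.rpow_add_one hs]

private lemma hasF_sqrt1 {p : ℝ × ℝ} (hx : 0 < p.1) :
    HasFDerivAt (fun q : ℝ × ℝ => Real.sqrt q.1)
      ((1 / (2 * Real.sqrt p.1)) • fst ℝ ℝ ℝ) p :=
  (Real.hasDerivAt_sqrt hx.ne').comp_hasFDerivAt p hasFDerivAt_fst

private lemma hasF_sqrt2 {p : ℝ × ℝ} (hy : 0 < p.2) :
    HasFDerivAt (fun q : ℝ × ℝ => Real.sqrt q.2)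
      ((1 / (2 * Real.sqrt p.2)) • snd ℝ ℝ ℝ) p :=
  (Real.hasDerivAt_sqrt hy.ne').comp_hasFDerivAt p hasFDerivAt_snd

private lemma hasF_F (a : ℝ) {p : ℝ × ℝ} (hx : 0 < p.1) (hy : 0 < p.2)
    (hs : Real.sqrt p.1 + Real.sqrt p.2 < 1) :
    HasFDerivAt (fun q : ℝ × ℝ => (1 - Real.sqrt q.1 - Real.sqrt q.2) ^ a)
      ((a * (1 - Real.sqrt p.1 - Real.sqrt p.2) ^ (a - 1)) •
        ((0 - (1 / (2 * Real.sqrt p.1)) • fst ℝ ℝ ℝ)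
          - (1 / (2 * Real.sqrt p.2)) • snd ℝ ℝ ℝ)) p := by
  have hu : (0:ℝ) < 1 - Real.sqrt p.1 - Real.sqrt p.2 := by linarith
  have hu' : HasFDerivAt (fun q : ℝ × ℝ => 1 - Real.sqrt q.1 - Real.sqrt q.2)
      ((0 - (1 / (2 * Real.sqrt p.1)) • fst ℝ ℝ ℝ)
        - (1 / (2 * Real.sqrt p.2)) • snd ℝ ℝ ℝ) p :=
    ((hasFDerivAt_const (1:ℝ) p).sub (hasF_sqrt1 hx)).sub (hasF_sqrt2 hy)
  exact (Real.hasDerivAt_rpow_const (p := a) (Or.inl hu.ne')).comp_hasFDerivAt p hu'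

private lemma pdx_F (a : ℝ) {p : ℝ × ℝ} (hx : 0 < p.1) (hy : 0 < p.2)
    (hs : Real.sqrt p.1 + Real.sqrt p.2 < 1) :
    fderiv ℝ (fun q : ℝ × ℝ => (1 - Real.sqrt q.1 - Real.sqrt q.2) ^ a) p (1, 0)
      = -(a * (1 - Real.sqrt p.1 - Real.sqrt p.2) ^ (a - 1)) / (2 * Real.sqrt p.1) := by
  rw [(hasF_F a hx hy hs).fderiv]
  simp
  ring

private lemma pdy_F (a : ℝ) {p : ℝ × ℝ} (hx : 0 < p.1) (hy : 0 < p.2)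
    (hs : Real.sqrt p.1 + Real.sqrt p.2 < 1) :
    fderiv ℝ (fun q : ℝ × ℝ => (1 - Real.sqrt q.1 - Real.sqrt q.2) ^ a) p (0, 1)
      = -(a * (1 - Real.sqrt p.1 - Real.sqrt p.2) ^ (a - 1)) / (2 * Real.sqrt p.2) := by
  rw [(hasF_F a hx hy hs).fderiv]
  simp
  ring

/-- Euler operator `θ_x = x·∂/∂x` on functions of two real variables. -/
noncomputable def thetaX (f : ℝ × ℝ → ℝ) : ℝ × ℝ → ℝ := fun p => p.1 * fderiv ℝ f p (1, 0)

/-- Euler operator `θ_y = y·∂/∂y` on functions of two real variables. -/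
noncomputable def thetaY (f : ℝ × ℝ → ℝ) : ℝ × ℝ → ℝ := fun p => p.2 * fderiv ℝ f p (0, 1)

/-- The first-order operator `a·θ_x + b·θ_y + c`. -/
noncomputable def eulerOp (a b c : ℝ) (f : ℝ × ℝ → ℝ) : ℝ × ℝ → ℝ :=
  fun p => a * thetaX f p + b * thetaY f p + c * f p

set_option maxHeartbeats 2000000

/-- `Φ(x,y) = (1 − √x − √y)^(−2r)` satisfies both Horn equations of
`F₄(r, r+1/2, 1/2, 1/2)` on `U = {x > 0, y > 0, √x + √y < 1}`. -/
theorem stmt_0 (r : ℝ) (Φ : ℝ × ℝ → ℝ)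
    (hΦ : Φ = fun p => (1 - Real.sqrt p.1 - Real.sqrt p.2) ^ (-(2 * r))) :
    ∀ p : ℝ × ℝ, 0 < p.1 → 0 < p.2 → Real.sqrt p.1 + Real.sqrt p.2 < 1 →
      thetaX (eulerOp 1 0 (-(1/2)) Φ) p
          - p.1 * eulerOp 1 1 r (eulerOp 1 1 (r + 1/2) Φ) p = 0 ∧
      thetaY (eulerOp 0 1 (-(1/2)) Φ) p
          - p.2 * eulerOp 1 1 r (eulerOp 1 1 (r + 1/2) Φ) p = 0 := by
  intro p hx hy hs
  have hsx : 0 < Real.sqrt p.1 := Real.sqrt_pos.mpr hx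
  have hsy : 0 < Real.sqrt p.2 := Real.sqrt_pos.mpr hy
  have hu : (0:ℝ) < 1 - Real.sqrt p.1 - Real.sqrt p.2 := by linarith
  set U : Set (ℝ × ℝ) :=
    {q | 0 < q.1 ∧ 0 < q.2 ∧ Real.sqrt q.1 + Real.sqrt q.2 < 1} with hUdef
  have hUopen : IsOpen U := by
    have h1 : IsOpen {q : ℝ × ℝ | 0 < q.1} := isOpen_lt continuous_const continuous_fst
    have h2 : IsOpen {q : ℝ × ℝ | 0 < q.2} := isOpen_lt continuous_const continuous_snd
    have h3 : IsOpen {q : ℝ × ℝ | Real.sqrt q.1 + Real.sqrt q.2 < 1} :=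
      isOpen_lt (by fun_prop) continuous_const
    exact h1.inter (h2.inter h3)
  have hpU : p ∈ U := ⟨hx, hy, hs⟩
  have hnhds : U ∈ nhds p := hUopen.mem_nhds hpU
  set g := eulerOp 1 1 (r + 1/2) Φ with hgdef
  set h := eulerOp 1 0 (-(1/2)) Φ with hhdef
  set h' := eulerOp 0 1 (-(1/2)) Φ with hh'def
  set e1 : ℝ × ℝ → ℝ := fun q =>
    r * (1 - Real.sqrt q.1 - Real.sqrt q.2) ^ (-(2*r) - 1)
      + 1/2 * (1 - Real.sqrt q.1 - Real.sqrt q.2) ^ (-(2*r)) with he1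
  set e2 : ℝ × ℝ → ℝ := fun q =>
    r * (Real.sqrt q.1 * (1 - Real.sqrt q.1 - Real.sqrt q.2) ^ (-(2*r) - 1))
      + (-(1/2)) * (1 - Real.sqrt q.1 - Real.sqrt q.2) ^ (-(2*r)) with he2
  set e3 : ℝ × ℝ → ℝ := fun q =>
    r * (Real.sqrt q.2 * (1 - Real.sqrt q.1 - Real.sqrt q.2) ^ (-(2*r) - 1))
      + (-(1/2)) * (1 - Real.sqrt q.1 - Real.sqrt q.2) ^ (-(2*r)) with he3
  -- EqOn facts
  have hge : Set.EqOn g e1 U := by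
    rintro q ⟨hqx, hqy, hqs⟩
    have hqsx : 0 < Real.sqrt q.1 := Real.sqrt_pos.mpr hqx
    have hqsy : 0 < Real.sqrt q.2 := Real.sqrt_pos.mpr hqy
    have hqu : (0:ℝ) < 1 - Real.sqrt q.1 - Real.sqrt q.2 := by linarith
    have m1 : Real.sqrt q.1 * Real.sqrt q.1 = q.1 := Real.mul_self_sqrt hqx.le
    have m2 : Real.sqrt q.2 * Real.sqrt q.2 = q.2 := Real.mul_self_sqrt hqy.le
    have E2 : (1 - Real.sqrt q.1 - Real.sqrt q.2) ^ (-(2*r))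
        = (1 - Real.sqrt q.1 - Real.sqrt q.2) ^ (-(2*r) - 1)
          * (1 - Real.sqrt q.1 - Real.sqrt q.2) :=
      rpow_step hqu.ne' (by ring)
    simp only [hgdef, he1, eulerOp, thetaX, thetaY, hΦ]
    rw [pdx_F (-(2*r)) hqx hqy hqs, pdy_F (-(2*r)) hqx hqy hqs, E2]
    set sx := Real.sqrt q.1 with hsx1
    set sy := Real.sqrt q.2 with hsy1
    rw [show q.1 = sx * sx from m1.symm, show q.2 = sy * sy from m2.symm]
    field_simp
    ring
  have hhe : Set.EqOn h e2 U := by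
    rintro q ⟨hqx, hqy, hqs⟩
    have hqsx : 0 < Real.sqrt q.1 := Real.sqrt_pos.mpr hqx
    have hqsy : 0 < Real.sqrt q.2 := Real.sqrt_pos.mpr hqy
    have m1 : Real.sqrt q.1 * Real.sqrt q.1 = q.1 := Real.mul_self_sqrt hqx.le
    simp only [hhdef, he2, eulerOp, thetaX, thetaY, hΦ]
    rw [pdx_F (-(2*r)) hqx hqy hqs]
    set sx := Real.sqrt q.1 with hsx1
    set sy := Real.sqrt q.2 with hsy1
    rw [show q.1 = sx * sx from m1.symm]
    field_simp
    ring
  have hh'e : Set.EqOn h' e3 U := by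
    rintro q ⟨hqx, hqy, hqs⟩
    have hqsx : 0 < Real.sqrt q.1 := Real.sqrt_pos.mpr hqx
    have hqsy : 0 < Real.sqrt q.2 := Real.sqrt_pos.mpr hqy
    have m2 : Real.sqrt q.2 * Real.sqrt q.2 = q.2 := Real.mul_self_sqrt hqy.le
    simp only [hh'def, he3, eulerOp, thetaX, thetaY, hΦ]
    rw [pdy_F (-(2*r)) hqx hqy hqs]
    set sx := Real.sqrt q.1 with hsx1
    set sy := Real.sqrt q.2 with hsy1
    rw [show q.2 = sy * sy from m2.symm]
    field_simp
    ring
  -- fderiv transfer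
  have hfg : fderiv ℝ g p = fderiv ℝ e1 p :=
    Filter.EventuallyEq.fderiv_eq (Filter.eventuallyEq_of_mem hnhds hge)
  have hfh : fderiv ℝ h p = fderiv ℝ e2 p :=
    Filter.EventuallyEq.fderiv_eq (Filter.eventuallyEq_of_mem hnhds hhe)
  have hfh' : fderiv ℝ h' p = fderiv ℝ e3 p :=
    Filter.EventuallyEq.fderiv_eq (Filter.eventuallyEq_of_mem hnhds hh'e)
  have hgp : g p = e1 p := hge hpU
  -- explicit derivatives of e1, e2, e3
  have hD1 : HasFDerivAt e1
      ((r • ((-(2*r) - 1) * (1 - Real.sqrt p.1 - Real.sqrt p.2) ^ (-(2*r) - 1 - 1)) •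
          ((0 - (1 / (2 * Real.sqrt p.1)) • fst ℝ ℝ ℝ)
            - (1 / (2 * Real.sqrt p.2)) • snd ℝ ℝ ℝ))
        + (1/2 : ℝ) • ((-(2*r)) * (1 - Real.sqrt p.1 - Real.sqrt p.2) ^ (-(2*r) - 1)) •
          ((0 - (1 / (2 * Real.sqrt p.1)) • fst ℝ ℝ ℝ)
            - (1 / (2 * Real.sqrt p.2)) • snd ℝ ℝ ℝ)) p :=
    ((hasF_F (-(2*r) - 1) hx hy hs).const_mul r).add
      ((hasF_F (-(2*r)) hx hy hs).const_mul (1/2))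
  have hD2 : HasFDerivAt e2
      ((r • (Real.sqrt p.1 •
          (((-(2*r) - 1) * (1 - Real.sqrt p.1 - Real.sqrt p.2) ^ (-(2*r) - 1 - 1)) •
            ((0 - (1 / (2 * Real.sqrt p.1)) • fst ℝ ℝ ℝ)
              - (1 / (2 * Real.sqrt p.2)) • snd ℝ ℝ ℝ))
          + ((1 - Real.sqrt p.1 - Real.sqrt p.2) ^ (-(2*r) - 1)) •
              ((1 / (2 * Real.sqrt p.1)) • fst ℝ ℝ ℝ)))
        + (-(1/2) : ℝ) • ((-(2*r)) * (1 - Real.sqrt p.1 - Real.sqrt p.2) ^ (-(2*r) - 1)) •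
          ((0 - (1 / (2 * Real.sqrt p.1)) • fst ℝ ℝ ℝ)
            - (1 / (2 * Real.sqrt p.2)) • snd ℝ ℝ ℝ)) p :=
    (((hasF_sqrt1 hx).mul (hasF_F (-(2*r) - 1) hx hy hs)).const_mul r).add
      ((hasF_F (-(2*r)) hx hy hs).const_mul (-(1/2)))
  have hD3 : HasFDerivAt e3
      ((r • (Real.sqrt p.2 •
          (((-(2*r) - 1) * (1 - Real.sqrt p.1 - Real.sqrt p.2) ^ (-(2*r) - 1 - 1)) •
            ((0 - (1 / (2 * Real.sqrt p.1)) • fst ℝ ℝ ℝ)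
              - (1 / (2 * Real.sqrt p.2)) • snd ℝ ℝ ℝ))
          + ((1 - Real.sqrt p.1 - Real.sqrt p.2) ^ (-(2*r) - 1)) •
              ((1 / (2 * Real.sqrt p.2)) • snd ℝ ℝ ℝ)))
        + (-(1/2) : ℝ) • ((-(2*r)) * (1 - Real.sqrt p.1 - Real.sqrt p.2) ^ (-(2*r) - 1)) •
          ((0 - (1 / (2 * Real.sqrt p.1)) • fst ℝ ℝ ℝ)
            - (1 / (2 * Real.sqrt p.2)) • snd ℝ ℝ ℝ)) p :=
    (((hasF_sqrt2 hy).mul (hasF_F (-(2*r) - 1) hx hy hs)).const_mul r).add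
      ((hasF_F (-(2*r)) hx hy hs).const_mul (-(1/2)))
  -- values
  have pe1x : fderiv ℝ e1 p (1, 0)
      = -(r * ((-(2*r) - 1) * (1 - Real.sqrt p.1 - Real.sqrt p.2) ^ (-(2*r) - 1 - 1))
            + 1/2 * ((-(2*r)) * (1 - Real.sqrt p.1 - Real.sqrt p.2) ^ (-(2*r) - 1)))
          / (2 * Real.sqrt p.1) := by
    rw [hD1.fderiv]
    simp only [ContinuousLinearMap.add_apply, ContinuousLinearMap.smul_apply,
      ContinuousLinearMap.sub_apply, ContinuousLinearMap.zero_apply,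
      ContinuousLinearMap.coe_fst', ContinuousLinearMap.coe_snd', smul_eq_mul]
    ring
  have pe1y : fderiv ℝ e1 p (0, 1)
      = -(r * ((-(2*r) - 1) * (1 - Real.sqrt p.1 - Real.sqrt p.2) ^ (-(2*r) - 1 - 1))
            + 1/2 * ((-(2*r)) * (1 - Real.sqrt p.1 - Real.sqrt p.2) ^ (-(2*r) - 1)))
          / (2 * Real.sqrt p.2) := by
    rw [hD1.fderiv]
    simp only [ContinuousLinearMap.add_apply, ContinuousLinearMap.smul_apply,
      ContinuousLinearMap.sub_apply, ContinuousLinearMap.zero_apply,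
      ContinuousLinearMap.coe_fst', ContinuousLinearMap.coe_snd', smul_eq_mul]
    ring
  have pe2x : fderiv ℝ e2 p (1, 0)
      = r * (Real.sqrt p.1 *
            (-((-(2*r) - 1) * (1 - Real.sqrt p.1 - Real.sqrt p.2) ^ (-(2*r) - 1 - 1))
              / (2 * Real.sqrt p.1))
          + (1 - Real.sqrt p.1 - Real.sqrt p.2) ^ (-(2*r) - 1) / (2 * Real.sqrt p.1))
        + (-(1/2)) * (-((-(2*r)) * (1 - Real.sqrt p.1 - Real.sqrt p.2) ^ (-(2*r) - 1))
            / (2 * Real.sqrt p.1)) := by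
    rw [hD2.fderiv]
    simp only [ContinuousLinearMap.add_apply, ContinuousLinearMap.smul_apply,
      ContinuousLinearMap.sub_apply, ContinuousLinearMap.zero_apply,
      ContinuousLinearMap.coe_fst', ContinuousLinearMap.coe_snd', smul_eq_mul]
    ring
  have pe3y : fderiv ℝ e3 p (0, 1)
      = r * (Real.sqrt p.2 *
            (-((-(2*r) - 1) * (1 - Real.sqrt p.1 - Real.sqrt p.2) ^ (-(2*r) - 1 - 1))
              / (2 * Real.sqrt p.2))
          + (1 - Real.sqrt p.1 - Real.sqrt p.2) ^ (-(2*r) - 1) / (2 * Real.sqrt p.2))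
        + (-(1/2)) * (-((-(2*r)) * (1 - Real.sqrt p.1 - Real.sqrt p.2) ^ (-(2*r) - 1))
            / (2 * Real.sqrt p.2)) := by
    rw [hD3.fderiv]
    simp only [ContinuousLinearMap.add_apply, ContinuousLinearMap.smul_apply,
      ContinuousLinearMap.sub_apply, ContinuousLinearMap.zero_apply,
      ContinuousLinearMap.coe_fst', ContinuousLinearMap.coe_snd', smul_eq_mul]
    ring
  -- power step rewrites
  have E1 : (1 - Real.sqrt p.1 - Real.sqrt p.2) ^ (-(2*r) - 1)
      = (1 - Real.sqrt p.1 - Real.sqrt p.2) ^ (-(2*r) - 1 - 1)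
        * (1 - Real.sqrt p.1 - Real.sqrt p.2) := rpow_step hu.ne' (by ring)
  have E2 : (1 - Real.sqrt p.1 - Real.sqrt p.2) ^ (-(2*r))
      = (1 - Real.sqrt p.1 - Real.sqrt p.2) ^ (-(2*r) - 1 - 1)
        * (1 - Real.sqrt p.1 - Real.sqrt p.2) * (1 - Real.sqrt p.1 - Real.sqrt p.2) := by
    rw [rpow_step hu.ne' (show (-(2*r) : ℝ) = (-(2*r) - 1) + 1 by ring), E1]
  have m1 : Real.sqrt p.1 * Real.sqrt p.1 = p.1 := Real.mul_self_sqrt hx.le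
  have m2 : Real.sqrt p.2 * Real.sqrt p.2 = p.2 := Real.mul_self_sqrt hy.le
  constructor
  · simp only [thetaX, thetaY, eulerOp]
    rw [hfh, hfg, hgp, pe2x, pe1x, pe1y]
    simp only [he1]
    set sx := Real.sqrt p.1 with hsx1
    set sy := Real.sqrt p.2 with hsy1
    rw [show p.1 = sx * sx from m1.symm, show p.2 = sy * sy from m2.symm, E2, E1]
    field_simp
    ring
  · simp only [thetaX, thetaY, eulerOp]
    rw [hfh', hfg, hgp, pe3y, pe1x, pe1y]
    simp only [he1]
    set sx := Real.sqrt p.1 with hsx1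
    set sy := Real.sqrt p.2 with hsy1
    rw [show p.1 = sx * sx from m1.symm, show p.2 = sy * sy from m2.symm, E2, E1]
    field_simp
    ring
end

section
/- Let n ≥ 1 be an integer and r a real number. On the open set of points (z₁, …, z_{2n+2}) ∈ ℝ^{2n+2} with all coordinates positive and Σ_{i=1}^{n} √(z_{i+2} z_{n+i+2}/(z₁z₂)) < 1, define Φ̃(z) = z₁^(−r) z₂^(−r−1/2) (∏_{i=3}^{n+2} z_i^(−1/2)) · (1 − Σ_{i=1}^{n} √(z_{i+2} z_{n+i+2}/(z₁z₂)))^(−2r). Then Φ̃ satisfies the Euler (homogeneity) equations: (z₁∂₁ + z_{n+3}∂_{n+3} + ⋯ + z_{2n+2}∂_{2n+2})Φ̃ = −r·Φ̃; (z₂∂₂ + z_{n+3}∂_{n+3} + ⋯ + z_{2n+2}∂_{2n+2})Φ̃ = −(r+1/2)·Φ̃; and (z_k∂_k − z_{n+k}∂_{n+k})Φ̃ = −(1/2)·Φ̃ for every k with 3 ≤ k ≤ n+2. -/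
/-- Partial derivative `∂_j` of a function of `N` real variables. -/
noncomputable def pd {N : ℕ} (j : Fin N) (f : (Fin N → ℝ) → ℝ) (z : Fin N → ℝ) : ℝ :=
  fderiv ℝ f z (Pi.single j 1)

/-- The homogeneous function
`Φ̃(z) = z₁^(−r) z₂^(−r−1/2) ∏_{i=3}^{n+2} z_i^(−1/2) · (1 − Σ_{i=1}^{n} √(z_{i+2}z_{n+i+2}/(z₁z₂)))^(−2r)`
(indices shifted down by one in Lean). -/
noncomputable def PhiTilde (n : ℕ) (r : ℝ) (z : Fin (2 * n + 2) → ℝ) : ℝ :=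
  z ⟨0, by omega⟩ ^ (-r) * z ⟨1, by omega⟩ ^ (-r - 1/2) *
    (∏ i : Fin n, z ⟨i.1 + 2, by have := i.isLt; omega⟩ ^ (-(1 : ℝ)/2)) *
    (1 - ∑ i : Fin n,
        Real.sqrt (z ⟨i.1 + 2, by have := i.isLt; omega⟩ *
            z ⟨n + i.1 + 2, by have := i.isLt; omega⟩ /
          (z ⟨0, by omega⟩ * z ⟨1, by omega⟩))) ^ (-(2 * r))

lemma euler_from_hom {N : ℕ} (f : (Fin N → ℝ) → ℝ) (z : Fin N → ℝ)
    (w : Fin N → ℝ) (c : ℝ) (hf : DifferentiableAt ℝ f z)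
    (hom : ∀ t : ℝ, 0 < t → f (fun j => t ^ (w j) * z j) = t ^ c * f z) :
    ∑ j, w j * z j * pd j f z = c * f z := by
  set γ : ℝ → (Fin N → ℝ) := fun t j => t ^ (w j) * z j with hγ
  have hγ1 : γ 1 = z := by funext j; simp [hγ]
  have hder : HasDerivAt γ (fun j => w j * z j) 1 := by
    apply hasDerivAt_pi.mpr
    intro j
    have h1 : HasDerivAt (fun t : ℝ => t ^ (w j)) (w j * (1:ℝ) ^ (w j - 1)) 1 :=
      Real.hasDerivAt_rpow_const (Or.inl one_ne_zero)
    simpa using h1.mul_const (z j)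
  have hcomp : HasDerivAt (fun t => f (γ t)) (fderiv ℝ f z (fun j => w j * z j)) 1 := by
    have h := hf.hasFDerivAt
    rw [← hγ1] at h
    have h2 := h.comp_hasDerivAt 1 hder
    rw [hγ1] at h2
    exact h2
  have heq : (fun t => f (γ t)) =ᶠ[nhds (1:ℝ)] fun t => t ^ c * f z := by
    filter_upwards [Ioi_mem_nhds (zero_lt_one)] with t ht
    exact hom t ht
  have hder2 : HasDerivAt (fun t : ℝ => t ^ c * f z) (c * f z) 1 := by
    have h1 : HasDerivAt (fun t : ℝ => t ^ c) (c * (1:ℝ) ^ (c - 1)) 1 :=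
      Real.hasDerivAt_rpow_const (Or.inl one_ne_zero)
    simpa using h1.mul_const (f z)
  have key : fderiv ℝ f z (fun j => w j * z j) = c * f z := by
    have h3 : HasDerivAt (fun t => f (γ t)) (c * f z) 1 :=
      hder2.congr_of_eventuallyEq heq
    exact hcomp.unique h3
  rw [← key]
  have hv : (fun j => w j * z j) = ∑ j : Fin N, (w j * z j) • (Pi.single j 1 : Fin N → ℝ) := by
    funext k
    rw [Finset.sum_apply]
    simp [Pi.single_apply]
  rw [hv, map_sum]
  simp [pd]

lemma sum_split (n : ℕ) (F : Fin (2*n+2) → ℝ) :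
    ∑ j, F j = F ⟨0, by omega⟩ + F ⟨1, by omega⟩
      + (∑ i : Fin n, F ⟨i.1+2, by have := i.isLt; omega⟩)
      + ∑ i : Fin n, F ⟨n+i.1+2, by have := i.isLt; omega⟩ := by
  set G : ℕ → ℝ := fun m => if h : m < 2*n+2 then F ⟨m,h⟩ else 0 with hG
  have h1 : ∑ j, F j = ∑ m ∈ Finset.range (2*n+2), G m := by
    rw [← Fin.sum_univ_eq_sum_range]
    apply Finset.sum_congr rfl
    intro j _
    simp [hG, j.isLt]
  have h2 : ∑ m ∈ Finset.range (2*n+2), G m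
      = ∑ m ∈ Finset.range 2, G m + ∑ m ∈ Finset.Ico 2 (n+2), G m
        + ∑ m ∈ Finset.Ico (n+2) (2*n+2), G m := by
    rw [← Finset.sum_range_add_sum_Ico G (show n+2 ≤ 2*n+2 by omega),
      ← Finset.sum_range_add_sum_Ico G (show 2 ≤ n+2 by omega)]
  have h3 : ∑ m ∈ Finset.range 2, G m = F ⟨0, by omega⟩ + F ⟨1, by omega⟩ := by
    rw [Finset.sum_range_succ, Finset.sum_range_one]
    simp only [hG]
    rw [dif_pos (by omega), dif_pos (by omega)]
  have h4 : ∑ m ∈ Finset.Ico 2 (n+2), G m = ∑ i : Fin n, F ⟨i.1+2, by have := i.isLt; omega⟩ := by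
    rw [Finset.sum_Ico_eq_sum_range]
    simp only [show n+2-2 = n from by omega]
    rw [← Fin.sum_univ_eq_sum_range (fun m => G (2+m))]
    apply Finset.sum_congr rfl
    intro i _
    simp only [hG]
    rw [dif_pos (by have := i.isLt; omega)]
    congr 1
    apply Fin.ext
    simp
    omega
  have h5 : ∑ m ∈ Finset.Ico (n+2) (2*n+2), G m
      = ∑ i : Fin n, F ⟨n+i.1+2, by have := i.isLt; omega⟩ := by
    rw [Finset.sum_Ico_eq_sum_range]
    simp only [show 2*n+2-(n+2) = n from by omega]
    rw [← Fin.sum_univ_eq_sum_range (fun m => G (n+2+m))]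
    apply Finset.sum_congr rfl
    intro i _
    simp only [hG]
    rw [dif_pos (by have := i.isLt; omega)]
    congr 1
    apply Fin.ext
    simp
    omega
  rw [h1, h2, h3, h4, h5]

/-- Weight vector with entries `a, b` in positions 0, 1; `u i` in position `i+2`;
`v i` in position `n+i+2`. -/
def W (n : ℕ) (a b : ℝ) (u v : Fin n → ℝ) : Fin (2*n+2) → ℝ := fun j =>
  if h0 : j.1 = 0 then a else if h1 : j.1 = 1 then b
  else if h : j.1 < n + 2 then u ⟨j.1 - 2, by omega⟩
  else v ⟨j.1 - (n+2), by have := j.isLt; omega⟩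

lemma W_zero (n : ℕ) (a b : ℝ) (u v : Fin n → ℝ) (h : 0 < 2*n+2) :
    W n a b u v ⟨0, h⟩ = a := by simp [W]

lemma W_one (n : ℕ) (a b : ℝ) (u v : Fin n → ℝ) (h : 1 < 2*n+2) :
    W n a b u v ⟨1, h⟩ = b := by simp [W]

lemma W_mid (n : ℕ) (a b : ℝ) (u v : Fin n → ℝ) (i : Fin n) (h : i.1+2 < 2*n+2) :
    W n a b u v ⟨i.1+2, h⟩ = u i := by
  have hi := i.isLt
  simp only [W]
  rw [dif_neg (by omega), dif_neg (by omega), dif_pos (by omega)]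
  exact congrArg u (by apply Fin.ext; simp)

lemma W_tail (n : ℕ) (a b : ℝ) (u v : Fin n → ℝ) (i : Fin n) (h : n+i.1+2 < 2*n+2) :
    W n a b u v ⟨n+i.1+2, h⟩ = v i := by
  have hi := i.isLt
  simp only [W]
  rw [dif_neg (by omega), dif_neg (by omega), dif_neg (by omega)]
  exact congrArg v (by apply Fin.ext; simp)

lemma phi_hom (n : ℕ) (r : ℝ) (z : Fin (2*n+2) → ℝ) (hz : ∀ i, 0 < z i)
    (a b : ℝ) (u v : Fin n → ℝ) (huv : ∀ i, u i + v i = a + b)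
    (t : ℝ) (ht : 0 < t) :
    PhiTilde n r (fun j => t ^ (W n a b u v j) * z j)
      = t ^ (-r * a + (-r - 1/2) * b + (-(1:ℝ)/2) * ∑ i, u i) * PhiTilde n r z := by
  have hta : ∀ e : ℝ, (0:ℝ) < t ^ e := fun e => Real.rpow_pos_of_pos ht e
  simp only [PhiTilde, W_zero, W_one, W_mid, W_tail]
  have hS : (∑ i : Fin n,
      Real.sqrt ((t ^ u i * z ⟨i.1 + 2, by have := i.isLt; omega⟩) *
          (t ^ v i * z ⟨n + i.1 + 2, by have := i.isLt; omega⟩) /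
        ((t ^ a * z ⟨0, by omega⟩) * (t ^ b * z ⟨1, by omega⟩))))
      = ∑ i : Fin n,
      Real.sqrt (z ⟨i.1 + 2, by have := i.isLt; omega⟩ *
          z ⟨n + i.1 + 2, by have := i.isLt; omega⟩ /
        (z ⟨0, by omega⟩ * z ⟨1, by omega⟩)) := by
    apply Finset.sum_congr rfl
    intro i _
    congr 1
    rw [show (t ^ u i * z ⟨i.1 + 2, by have := i.isLt; omega⟩) *
          (t ^ v i * z ⟨n + i.1 + 2, by have := i.isLt; omega⟩)
        = (t ^ u i * t ^ v i) * (z ⟨i.1 + 2, by have := i.isLt; omega⟩ *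
            z ⟨n + i.1 + 2, by have := i.isLt; omega⟩) from by ring,
      show (t ^ a * z ⟨0, by omega⟩) * (t ^ b * z ⟨1, by omega⟩)
        = (t ^ a * t ^ b) * (z ⟨0, by omega⟩ * z ⟨1, by omega⟩) from by ring,
      ← Real.rpow_add ht, ← Real.rpow_add ht, huv i,
      mul_div_mul_left _ _ (ne_of_gt (hta (a+b)))]
  have hP : (∏ i : Fin n, (t ^ u i * z ⟨i.1 + 2, by have := i.isLt; omega⟩) ^ (-(1:ℝ)/2))
      = t ^ ((-(1:ℝ)/2) * ∑ i, u i)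
        * ∏ i : Fin n, z ⟨i.1 + 2, by have := i.isLt; omega⟩ ^ (-(1:ℝ)/2) := by
    rw [show ((-(1:ℝ)/2) * ∑ i, u i) = ∑ i : Fin n, u i * (-(1:ℝ)/2) from by
        rw [Finset.mul_sum]; exact Finset.sum_congr rfl fun i _ => by ring,
      Real.rpow_sum_of_pos ht, ← Finset.prod_mul_distrib]
    apply Finset.prod_congr rfl
    intro i _
    rw [Real.mul_rpow (hta _).le (hz _).le, ← Real.rpow_mul ht.le]
  rw [hS, hP,
    Real.mul_rpow (hta a).le (hz _).le, ← Real.rpow_mul ht.le,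
    Real.mul_rpow (hta b).le (hz _).le, ← Real.rpow_mul ht.le]
  rw [show t ^ (a * -r) * z ⟨0, by omega⟩ ^ (-r) * (t ^ (b * (-r - 1/2)) * z ⟨1, by omega⟩ ^ (-r - 1/2))
      * (t ^ ((-(1:ℝ)/2) * ∑ i, u i) * ∏ i : Fin n, z ⟨i.1 + 2, by have := i.isLt; omega⟩ ^ (-(1:ℝ)/2))
      = (t ^ (a * -r) * t ^ (b * (-r - 1/2)) * t ^ ((-(1:ℝ)/2) * ∑ i, u i))
        * (z ⟨0, by omega⟩ ^ (-r) * z ⟨1, by omega⟩ ^ (-r - 1/2)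
          * ∏ i : Fin n, z ⟨i.1 + 2, by have := i.isLt; omega⟩ ^ (-(1:ℝ)/2)) from by ring,
    ← Real.rpow_add ht, ← Real.rpow_add ht]
  rw [show a * -r + b * (-r - 1/2) + (-(1:ℝ)/2) * ∑ i, u i
      = -r * a + (-r - 1/2) * b + (-(1:ℝ)/2) * ∑ i, u i from by ring]
  ring

lemma phi_diff (n : ℕ) (r : ℝ) (z : Fin (2*n+2) → ℝ) (hz : ∀ i, 0 < z i)
    (hsum : (∑ i : Fin n,
        Real.sqrt (z ⟨i.1 + 2, by have := i.isLt; omega⟩ *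
            z ⟨n + i.1 + 2, by have := i.isLt; omega⟩ /
          (z ⟨0, by omega⟩ * z ⟨1, by omega⟩))) < 1) :
    DifferentiableAt ℝ (PhiTilde n r) z := by
  have happ : ∀ j : Fin (2*n+2), DifferentiableAt ℝ (fun w : Fin (2*n+2) → ℝ => w j) z :=
    fun j => differentiableAt_apply j z
  have h0 : DifferentiableAt ℝ (fun w : Fin (2*n+2) → ℝ => w ⟨0, by omega⟩ ^ (-r)) z :=
    (happ _).rpow_const (Or.inl (hz _).ne')
  have h1 : DifferentiableAt ℝ (fun w : Fin (2*n+2) → ℝ => w ⟨1, by omega⟩ ^ (-r - 1/2)) z :=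
    (happ _).rpow_const (Or.inl (hz _).ne')
  have hprod : DifferentiableAt ℝ
      (fun w : Fin (2*n+2) → ℝ =>
        ∏ i : Fin n, w ⟨i.1 + 2, by have := i.isLt; omega⟩ ^ (-(1:ℝ)/2)) z :=
    by
    have h := HasFDerivAt.finset_prod (u := (Finset.univ : Finset (Fin n)))
      (g := fun (i : Fin n) (w : Fin (2*n+2) → ℝ) =>
        w ⟨i.1 + 2, by have := i.isLt; omega⟩ ^ (-(1:ℝ)/2))
      (g' := fun i => fderiv ℝ
        (fun (w : Fin (2*n+2) → ℝ) => w ⟨i.1 + 2, by have := i.isLt; omega⟩ ^ (-(1:ℝ)/2)) z)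
      (x := z)
      (fun i _ => ((happ _).rpow_const (Or.inl (hz _).ne')).hasFDerivAt)
    exact h.differentiableAt
  have hsqrt : ∀ i : Fin n, DifferentiableAt ℝ
      (fun w : Fin (2*n+2) → ℝ =>
        Real.sqrt (w ⟨i.1 + 2, by have := i.isLt; omega⟩ *
            w ⟨n + i.1 + 2, by have := i.isLt; omega⟩ /
          (w ⟨0, by omega⟩ * w ⟨1, by omega⟩))) z := by
    intro i
    have hnum : DifferentiableAt ℝ
        (fun w : Fin (2*n+2) → ℝ =>
          w ⟨i.1 + 2, by have := i.isLt; omega⟩ *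
            w ⟨n + i.1 + 2, by have := i.isLt; omega⟩) z := (happ _).mul (happ _)
    have hden : DifferentiableAt ℝ
        (fun w : Fin (2*n+2) → ℝ => w ⟨0, by omega⟩ * w ⟨1, by omega⟩) z :=
      (happ _).mul (happ _)
    have harg : DifferentiableAt ℝ
        (fun w : Fin (2*n+2) → ℝ =>
          w ⟨i.1 + 2, by have := i.isLt; omega⟩ *
            w ⟨n + i.1 + 2, by have := i.isLt; omega⟩ /
          (w ⟨0, by omega⟩ * w ⟨1, by omega⟩)) z :=
      by
      simp only [div_eq_mul_inv]
      exact hnum.mul (hden.inv (ne_of_gt (mul_pos (hz ⟨0, by omega⟩) (hz ⟨1, by omega⟩))))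
    apply harg.sqrt
    exact ne_of_gt (div_pos (mul_pos (hz _) (hz _)) (mul_pos (hz _) (hz _)))
  have hbase : DifferentiableAt ℝ
      (fun w : Fin (2*n+2) → ℝ => 1 - ∑ i : Fin n,
        Real.sqrt (w ⟨i.1 + 2, by have := i.isLt; omega⟩ *
            w ⟨n + i.1 + 2, by have := i.isLt; omega⟩ /
          (w ⟨0, by omega⟩ * w ⟨1, by omega⟩))) z :=
    (differentiableAt_const 1).sub (DifferentiableAt.fun_sum fun i _ => hsqrt i)
  have hB : DifferentiableAt ℝ
      (fun w : Fin (2*n+2) → ℝ => (1 - ∑ i : Fin n,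
        Real.sqrt (w ⟨i.1 + 2, by have := i.isLt; omega⟩ *
            w ⟨n + i.1 + 2, by have := i.isLt; omega⟩ /
          (w ⟨0, by omega⟩ * w ⟨1, by omega⟩))) ^ (-(2*r))) z :=
    by
    apply hbase.rpow_const
    left
    have : (0:ℝ) < 1 - ∑ i : Fin n,
        Real.sqrt (z ⟨i.1 + 2, by have := i.isLt; omega⟩ *
            z ⟨n + i.1 + 2, by have := i.isLt; omega⟩ /
          (z ⟨0, by omega⟩ * z ⟨1, by omega⟩)) := by linarith
    exact this.ne'
  exact (((h0.mul h1)).mul hprod).mul hB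

/-- `Φ̃` satisfies the Euler (homogeneity) equations of the A-hypergeometric system
attached to β = (−r, −r−1/2, −1/2, …, −1/2) at every point where all coordinates are
positive and `Σ √(z_{i+2}z_{n+i+2}/(z₁z₂)) < 1`. -/
theorem stmt_3 (n : ℕ) (hn : 1 ≤ n) (r : ℝ) (z : Fin (2 * n + 2) → ℝ)
    (hz : ∀ i, 0 < z i)
    (hsum : (∑ i : Fin n,
        Real.sqrt (z ⟨i.1 + 2, by have := i.isLt; omega⟩ *
            z ⟨n + i.1 + 2, by have := i.isLt; omega⟩ /
          (z ⟨0, by omega⟩ * z ⟨1, by omega⟩))) < 1) :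
    (z ⟨0, by omega⟩ * pd ⟨0, by omega⟩ (PhiTilde n r) z
        + ∑ i : Fin n, z ⟨n + i.1 + 2, by have := i.isLt; omega⟩ *
            pd ⟨n + i.1 + 2, by have := i.isLt; omega⟩ (PhiTilde n r) z
      = -r * PhiTilde n r z) ∧
    (z ⟨1, by omega⟩ * pd ⟨1, by omega⟩ (PhiTilde n r) z
        + ∑ i : Fin n, z ⟨n + i.1 + 2, by have := i.isLt; omega⟩ *
            pd ⟨n + i.1 + 2, by have := i.isLt; omega⟩ (PhiTilde n r) z
      = -(r + 1/2) * PhiTilde n r z) ∧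
    (∀ (k : ℕ) (_hk1 : 3 ≤ k) (_hk2 : k ≤ n + 2),
      z ⟨k - 1, by omega⟩ * pd ⟨k - 1, by omega⟩ (PhiTilde n r) z
          - z ⟨n + k - 1, by omega⟩ * pd ⟨n + k - 1, by omega⟩ (PhiTilde n r) z
        = -(1/2) * PhiTilde n r z) := by
  have hdiff : DifferentiableAt ℝ (PhiTilde n r) z := phi_diff n r z hz hsum
  refine ⟨?_, ?_, ?_⟩
  · -- first Euler equation
    have key := euler_from_hom (PhiTilde n r) z (W n 1 0 (fun _ => 0) (fun _ => 1)) (-r) hdiff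
      (fun t ht => by
        have h := phi_hom n r z hz 1 0 (fun _ => 0) (fun _ => 1) (fun i => by ring) t ht
        rw [show (-r * 1 + (-r - 1/2) * 0 + (-(1:ℝ)/2) * ∑ _i : Fin n, (0:ℝ)) = -r by simp] at h
        exact h)
    rw [sum_split n (fun j => W n 1 0 (fun _ => 0) (fun _ => 1) j * z j * pd j (PhiTilde n r) z)]
      at key
    simp only [W_zero, W_one, W_mid, W_tail, one_mul, zero_mul, Finset.sum_const_zero,
      add_zero, zero_add] at key
    exact key
  · -- second Euler equation
    have key := euler_from_hom (PhiTilde n r) z (W n 0 1 (fun _ => 0) (fun _ => 1)) (-(r + 1/2))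
      hdiff
      (fun t ht => by
        have h := phi_hom n r z hz 0 1 (fun _ => 0) (fun _ => 1) (fun i => by ring) t ht
        rw [show (-r * 0 + (-r - 1/2) * 1 + (-(1:ℝ)/2) * ∑ _i : Fin n, (0:ℝ)) = -(r + 1/2) by
          simp; ring] at h
        exact h)
    rw [sum_split n (fun j => W n 0 1 (fun _ => 0) (fun _ => 1) j * z j * pd j (PhiTilde n r) z)]
      at key
    simp only [W_zero, W_one, W_mid, W_tail, one_mul, zero_mul, Finset.sum_const_zero,
      add_zero, zero_add] at key
    exact key
  · -- third family of Euler equations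
    intro k hk1 hk2
    have hk3 : k - 3 < n := by omega
    set k0 : Fin n := ⟨k - 3, hk3⟩ with hk0
    have key := euler_from_hom (PhiTilde n r) z
      (W n 0 0 (fun i => if i = k0 then 1 else 0) (fun i => if i = k0 then -1 else 0))
      (-(1/2)) hdiff
      (fun t ht => by
        have h := phi_hom n r z hz 0 0 (fun i => if i = k0 then 1 else 0)
          (fun i => if i = k0 then -1 else 0)
          (fun i => by by_cases hi : i = k0 <;> simp [hi]) t ht
        rw [show (-r * 0 + (-r - 1/2) * 0
            + (-(1:ℝ)/2) * ∑ i : Fin n, (if i = k0 then (1:ℝ) else 0)) = -(1/2) by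
          rw [Finset.sum_ite_eq' Finset.univ k0 (fun _ => (1:ℝ))]
          norm_num] at h
        exact h)
    rw [sum_split n (fun j =>
      W n 0 0 (fun i => if i = k0 then 1 else 0) (fun i => if i = k0 then -1 else 0) j
        * z j * pd j (PhiTilde n r) z)] at key
    simp only [W_zero, W_one, W_mid, W_tail, zero_mul, zero_add, ite_mul, one_mul, neg_mul,
      Finset.sum_ite_eq', Finset.mem_univ, if_true] at key
    have e1 : (⟨k0.1 + 2, by have := k0.isLt; omega⟩ : Fin (2*n+2))
        = ⟨k - 1, by omega⟩ := Fin.ext (by simp [hk0]; omega)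
    have e2 : (⟨n + k0.1 + 2, by have := k0.isLt; omega⟩ : Fin (2*n+2))
        = ⟨n + k - 1, by omega⟩ := Fin.ext (by simp [hk0]; omega)
    rw [e1, e2] at key
    linarith [key]
end

section
/- Let r be a real number. The Puiseux monomial Φ(x,y) = x^((r−2)/3) · y^((−r−1)/3), defined for x > 0 and y > 0, satisfies both Horn differential equations of G₃(r, 1−r): (θ_x(−θ_x + 2θ_y + r) − x(2θ_x − θ_y − r + 1)(2θ_x − θ_y − r + 2))Φ = 0 and (θ_y(2θ_x − θ_y + 1 − r) − y(−θ_x + 2θ_y + r)(−θ_x + 2θ_y + r + 1))Φ = 0. -/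
lemma mono_hasFDerivAt (a b : ℝ) (p : ℝ × ℝ) (hx : 0 < p.1) (hy : 0 < p.2) :
    HasFDerivAt (fun q : ℝ × ℝ => q.1 ^ a * q.2 ^ b)
      ((p.1 ^ a) • ((b * p.2 ^ (b - 1)) • ContinuousLinearMap.snd ℝ ℝ ℝ)
        + (p.2 ^ b) • ((a * p.1 ^ (a - 1)) • ContinuousLinearMap.fst ℝ ℝ ℝ)) p := by
  have h1 : HasFDerivAt (fun q : ℝ × ℝ => q.1 ^ a)
      ((a * p.1 ^ (a - 1)) • ContinuousLinearMap.fst ℝ ℝ ℝ) p :=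
    (Real.hasDerivAt_rpow_const (Or.inl hx.ne')).comp_hasFDerivAt p hasFDerivAt_fst
  have h2 : HasFDerivAt (fun q : ℝ × ℝ => q.2 ^ b)
      ((b * p.2 ^ (b - 1)) • ContinuousLinearMap.snd ℝ ℝ ℝ) p :=
    (Real.hasDerivAt_rpow_const (Or.inl hy.ne')).comp_hasFDerivAt p hasFDerivAt_snd
  exact h1.mul h2

example : True := trivial

lemma thetaX_mono (a b : ℝ) (p : ℝ × ℝ) (hx : 0 < p.1) (hy : 0 < p.2) :
    thetaX (fun q : ℝ × ℝ => q.1 ^ a * q.2 ^ b) p = a * (p.1 ^ a * p.2 ^ b) := by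
  unfold thetaX
  rw [(mono_hasFDerivAt a b p hx hy).fderiv]
  simp [Real.rpow_sub_one hx.ne']
  field_simp

lemma thetaY_mono (a b : ℝ) (p : ℝ × ℝ) (hx : 0 < p.1) (hy : 0 < p.2) :
    thetaY (fun q : ℝ × ℝ => q.1 ^ a * q.2 ^ b) p = b * (p.1 ^ a * p.2 ^ b) := by
  unfold thetaY
  rw [(mono_hasFDerivAt a b p hx hy).fderiv]
  simp [Real.rpow_sub_one hy.ne']
  field_simp

/-- The Puiseux monomial `Φ(x,y) = x^((r−2)/3)·y^((−r−1)/3)` satisfies both Horn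
equations of `G₃(r, 1−r)` for `x > 0`, `y > 0`. -/
theorem stmt_6 (r : ℝ) (Φ : ℝ × ℝ → ℝ)
    (hΦ : Φ = fun p => p.1 ^ ((r - 2) / 3) * p.2 ^ ((-r - 1) / 3)) :
    ∀ p : ℝ × ℝ, 0 < p.1 → 0 < p.2 →
      thetaX (eulerOp (-1) 2 r Φ) p
          - p.1 * eulerOp 2 (-1) (-r + 1) (eulerOp 2 (-1) (-r + 2) Φ) p = 0 ∧
      thetaY (eulerOp 2 (-1) (1 - r) Φ) p
          - p.2 * eulerOp (-1) 2 r (eulerOp (-1) 2 (r + 1) Φ) p = 0 := by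
  intro p hx hy
  have hU : {q : ℝ × ℝ | 0 < q.1 ∧ 0 < q.2} ∈ nhds p :=
    ((isOpen_lt continuous_const continuous_fst).inter
      (isOpen_lt continuous_const continuous_snd)).mem_nhds ⟨hx, hy⟩
  have tXq : ∀ q : ℝ × ℝ, 0 < q.1 → 0 < q.2 → thetaX Φ q = ((r - 2) / 3) * Φ q := by
    intro q h1 h2; rw [hΦ]; exact thetaX_mono _ _ q h1 h2
  have tYq : ∀ q : ℝ × ℝ, 0 < q.1 → 0 < q.2 → thetaY Φ q = ((-r - 1) / 3) * Φ q := by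
    intro q h1 h2; rw [hΦ]; exact thetaY_mono _ _ q h1 h2
  -- eventual identities
  have h1 : eulerOp (-1) 2 r Φ =ᶠ[nhds p] (fun _ => (0 : ℝ)) := by
    filter_upwards [hU] with q hq
    simp only [eulerOp, tXq q hq.1 hq.2, tYq q hq.1 hq.2]
    ring
  have h3 : eulerOp 2 (-1) (-r + 2) Φ =ᶠ[nhds p] Φ := by
    filter_upwards [hU] with q hq
    simp only [eulerOp, tXq q hq.1 hq.2, tYq q hq.1 hq.2]
    ring
  have h4 : eulerOp 2 (-1) (1 - r) Φ =ᶠ[nhds p] (fun _ => (0 : ℝ)) := by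
    filter_upwards [hU] with q hq
    simp only [eulerOp, tXq q hq.1 hq.2, tYq q hq.1 hq.2]
    ring
  have h5 : eulerOp (-1) 2 (r + 1) Φ =ᶠ[nhds p] Φ := by
    filter_upwards [hU] with q hq
    simp only [eulerOp, tXq q hq.1 hq.2, tYq q hq.1 hq.2]
    ring
  have tX : thetaX Φ p = ((r - 2) / 3) * Φ p := tXq p hx hy
  have tY : thetaY Φ p = ((-r - 1) / 3) * Φ p := tYq p hx hy
  constructor
  · have e1 : thetaX (eulerOp (-1) 2 r Φ) p = 0 := by
      simp [thetaX, h1.fderiv_eq]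
    have e2 : eulerOp 2 (-1) (-r + 1) (eulerOp 2 (-1) (-r + 2) Φ) p = 0 := by
      have fX : thetaX (eulerOp 2 (-1) (-r + 2) Φ) p = thetaX Φ p := by
        simp only [thetaX, h3.fderiv_eq]
      have fY : thetaY (eulerOp 2 (-1) (-r + 2) Φ) p = thetaY Φ p := by
        simp only [thetaY, h3.fderiv_eq]
      have fv : eulerOp 2 (-1) (-r + 2) Φ p = Φ p := h3.self_of_nhds
      simp only [eulerOp, fX, fY, fv] at *
      rw [tX, tY]; ring
    rw [e1, e2]; ring
  · have e1 : thetaY (eulerOp 2 (-1) (1 - r) Φ) p = 0 := by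
      simp [thetaY, h4.fderiv_eq]
    have e2 : eulerOp (-1) 2 r (eulerOp (-1) 2 (r + 1) Φ) p = 0 := by
      have fX : thetaX (eulerOp (-1) 2 (r + 1) Φ) p = thetaX Φ p := by
        simp only [thetaX, h5.fderiv_eq]
      have fY : thetaY (eulerOp (-1) 2 (r + 1) Φ) p = thetaY Φ p := by
        simp only [thetaY, h5.fderiv_eq]
      have fv : eulerOp (-1) 2 (r + 1) Φ p = Φ p := h5.self_of_nhds
      simp only [eulerOp, fX, fY, fv] at *
      rw [tX, tY]; ring
    rw [e1, e2]; ring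
end
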